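/- Let G₁ and G₂ be simple connected graphs with n₁ = |V(G₁)|, n₂ = |V(G₂)| vertices and m₁ = |E(G₁)|, m₂ = |E(G₂)| edges. Then the F-index of the vertex R-join satisfies F(G₁ ∨̇_R G₂) = 8F(G₁) + F(G₂) + 12n₂M₁(G₁) + 3n₁M₁(G₂) + 12m₁n₂² + 6m₂n₁² + n₁n₂(n₁² + n₂²) + 8m₁. -/

import Mathlib

/-- The subdivision graph `S(G)`: a new vertex is inserted into each edge of `G`
(each edge is replaced by a path of length 2). The inserted vertices form the
right summand `↥G.edgeSet`. -/
def Sgraph {V : Type*} (G : SimpleGraph V) : SimpleGraph (V ⊕ ↥G.edgeSet) where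
  Adj x y :=
    match x, y with
    | Sum.inl v, Sum.inr e => v ∈ (e : Sym2 V)
    | Sum.inr e, Sum.inl v => v ∈ (e : Sym2 V)
    | _, _ => False
  symm := by constructor; rintro (v | e) (w | f) h <;> exact h
  loopless := by constructor; rintro (v | e) h <;> exact h

/-- The graph `R(G)`: obtained from `G` by inserting a new vertex into each edge of `G`
and joining each new vertex to the end vertices of its corresponding edge. -/
def Rgraph {V : Type*} (G : SimpleGraph V) : SimpleGraph (V ⊕ ↥G.edgeSet) where
  Adj x y :=
    match x, y with
    | Sum.inl v, Sum.inl w => G.Adj v w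
    | Sum.inl v, Sum.inr e => v ∈ (e : Sym2 V)
    | Sum.inr e, Sum.inl v => v ∈ (e : Sym2 V)
    | Sum.inr _, Sum.inr _ => False
  symm := by
    constructor
    rintro (v | e) (w | f) h
    · exact G.adj_symm h
    · exact h
    · exact h
    · exact h
  loopless := by
    constructor
    rintro (v | e) h
    · exact G.irrefl h
    · exact h

/-- The graph `Q(G)`: obtained from `G` by inserting a new vertex into each edge of `G`,
then joining by edges those pairs of new vertices lying on adjacent edges of `G`. -/
def Qgraph {V : Type*} (G : SimpleGraph V) : SimpleGraph (V ⊕ ↥G.edgeSet) where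
  Adj x y :=
    match x, y with
    | Sum.inl _, Sum.inl _ => False
    | Sum.inl v, Sum.inr e => v ∈ (e : Sym2 V)
    | Sum.inr e, Sum.inl v => v ∈ (e : Sym2 V)
    | Sum.inr e, Sum.inr f => e ≠ f ∧ ∃ v, v ∈ (e : Sym2 V) ∧ v ∈ (f : Sym2 V)
  symm := by
    constructor
    rintro (v | e) (w | f) h
    · exact h
    · exact h
    · exact h
    · exact ⟨h.1.symm, by obtain ⟨v, h1, h2⟩ := h.2; exact ⟨v, h2, h1⟩⟩
  loopless := by
    constructor
    rintro (v | e) h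
    · exact h
    · exact h.1 rfl

/-- The total graph `T(G)`: obtained from `G` by inserting a new vertex into each edge,
joining each new vertex to the end vertices of its corresponding edge, and joining by
edges those pairs of new vertices lying on adjacent edges of `G`. -/
def Tgraph {V : Type*} (G : SimpleGraph V) : SimpleGraph (V ⊕ ↥G.edgeSet) where
  Adj x y :=
    match x, y with
    | Sum.inl v, Sum.inl w => G.Adj v w
    | Sum.inl v, Sum.inr e => v ∈ (e : Sym2 V)
    | Sum.inr e, Sum.inl v => v ∈ (e : Sym2 V)
    | Sum.inr e, Sum.inr f => e ≠ f ∧ ∃ v, v ∈ (e : Sym2 V) ∧ v ∈ (f : Sym2 V)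
  symm := by
    constructor
    rintro (v | e) (w | f) h
    · exact G.adj_symm h
    · exact h
    · exact h
    · exact ⟨h.1.symm, by obtain ⟨v, h1, h2⟩ := h.2; exact ⟨v, h2, h1⟩⟩
  loopless := by
    constructor
    rintro (v | e) h
    · exact G.irrefl h
    · exact h.1 rfl

/-- The disjoint union of `H` and `K` together with all edges joining a vertex `a` of `H`
with `P a` to every vertex of `K`. -/
def joinOn {A B : Type*} (H : SimpleGraph A) (K : SimpleGraph B) (P : A → Prop) :
    SimpleGraph (A ⊕ B) where
  Adj x y :=
    match x, y with
    | Sum.inl a, Sum.inl a' => H.Adj a a'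
    | Sum.inr b, Sum.inr b' => K.Adj b b'
    | Sum.inl a, Sum.inr _ => P a
    | Sum.inr _, Sum.inl a => P a
  symm := by
    constructor
    rintro (a | b) (a' | b') h
    · exact H.adj_symm h
    · exact h
    · exact h
    · exact K.adj_symm h
  loopless := by
    constructor
    rintro (a | b) h
    · exact H.irrefl h
    · exact K.irrefl h

/-- The vertex S-join `G₁ ∨̇_S G₂`: obtained from `S(G₁)` and `G₂` by joining each vertex
of `V(G₁)` to every vertex of `G₂`. -/
def vertexSJoin {V₁ V₂ : Type*} (G₁ : SimpleGraph V₁) (G₂ : SimpleGraph V₂) :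
    SimpleGraph ((V₁ ⊕ ↥G₁.edgeSet) ⊕ V₂) :=
  joinOn (Sgraph G₁) G₂ (fun x => x.isLeft)

/-- The edge S-join `G₁ ∨̱_S G₂`: obtained from `S(G₁)` and `G₂` by joining each inserted
vertex (each vertex of `I(G₁)`) to every vertex of `G₂`. -/
def edgeSJoin {V₁ V₂ : Type*} (G₁ : SimpleGraph V₁) (G₂ : SimpleGraph V₂) :
    SimpleGraph ((V₁ ⊕ ↥G₁.edgeSet) ⊕ V₂) :=
  joinOn (Sgraph G₁) G₂ (fun x => x.isRight)

/-- The vertex R-join `G₁ ∨̇_R G₂`. -/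
def vertexRJoin {V₁ V₂ : Type*} (G₁ : SimpleGraph V₁) (G₂ : SimpleGraph V₂) :
    SimpleGraph ((V₁ ⊕ ↥G₁.edgeSet) ⊕ V₂) :=
  joinOn (Rgraph G₁) G₂ (fun x => x.isLeft)

/-- The edge R-join `G₁ ∨̱_R G₂`. -/
def edgeRJoin {V₁ V₂ : Type*} (G₁ : SimpleGraph V₁) (G₂ : SimpleGraph V₂) :
    SimpleGraph ((V₁ ⊕ ↥G₁.edgeSet) ⊕ V₂) :=
  joinOn (Rgraph G₁) G₂ (fun x => x.isRight)

/-- The vertex Q-join `G₁ ∨̇_Q G₂`. -/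
def vertexQJoin {V₁ V₂ : Type*} (G₁ : SimpleGraph V₁) (G₂ : SimpleGraph V₂) :
    SimpleGraph ((V₁ ⊕ ↥G₁.edgeSet) ⊕ V₂) :=
  joinOn (Qgraph G₁) G₂ (fun x => x.isLeft)

/-- The edge Q-join `G₁ ∨̱_Q G₂`. -/
def edgeQJoin {V₁ V₂ : Type*} (G₁ : SimpleGraph V₁) (G₂ : SimpleGraph V₂) :
    SimpleGraph ((V₁ ⊕ ↥G₁.edgeSet) ⊕ V₂) :=
  joinOn (Qgraph G₁) G₂ (fun x => x.isRight)

/-- The vertex T-join `G₁ ∨̇_T G₂`. -/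
def vertexTJoin {V₁ V₂ : Type*} (G₁ : SimpleGraph V₁) (G₂ : SimpleGraph V₂) :
    SimpleGraph ((V₁ ⊕ ↥G₁.edgeSet) ⊕ V₂) :=
  joinOn (Tgraph G₁) G₂ (fun x => x.isLeft)

/-- The edge T-join `G₁ ∨̱_T G₂`. -/
def edgeTJoin {V₁ V₂ : Type*} (G₁ : SimpleGraph V₁) (G₂ : SimpleGraph V₂) :
    SimpleGraph ((V₁ ⊕ ↥G₁.edgeSet) ⊕ V₂) :=
  joinOn (Tgraph G₁) G₂ (fun x => x.isRight)

/-- Degree of a vertex in a graph on a finite vertex type. -/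
noncomputable def gdeg {V : Type*} [Finite V] (G : SimpleGraph V) (v : V) : ℕ :=
  haveI : Fintype ↥(G.neighborSet v) := Fintype.ofFinite _
  G.degree v

/-- The forgotten topological index (F-index): `F(G) = ∑_{v ∈ V(G)} d_G(v)³`. -/
noncomputable def Findex {V : Type*} [Finite V] (G : SimpleGraph V) : ℕ :=
  haveI := Fintype.ofFinite V
  ∑ v : V, gdeg G v ^ 3

/-- The first Zagreb index: `M₁(G) = ∑_{v ∈ V(G)} d_G(v)²`. -/
noncomputable def M1 {V : Type*} [Finite V] (G : SimpleGraph V) : ℕ :=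
  haveI := Fintype.ofFinite V
  ∑ v : V, gdeg G v ^ 2

/-- `M₄(G) = ∑_{v ∈ V(G)} d_G(v)⁴`. -/
noncomputable def M4 {V : Type*} [Finite V] (G : SimpleGraph V) : ℕ :=
  haveI := Fintype.ofFinite V
  ∑ v : V, gdeg G v ^ 4

/-- The hyper Zagreb index: `HM(G) = ∑_{uv ∈ E(G)} (d_G(u) + d_G(v))²`. -/
noncomputable def HM {V : Type*} [Finite V] (G : SimpleGraph V) : ℕ :=
  haveI : Fintype ↥G.edgeSet := Fintype.ofFinite _
  ∑ e : ↥G.edgeSet,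
    Sym2.lift ⟨fun u v => (gdeg G u + gdeg G v) ^ 2,
      fun u v => by dsimp only; rw [add_comm]⟩ (e : Sym2 V)

/-- The redefined Zagreb index:
`ReZM(G) = ∑_{uv ∈ E(G)} d_G(u) d_G(v) (d_G(u) + d_G(v))`. -/
noncomputable def ReZM {V : Type*} [Finite V] (G : SimpleGraph V) : ℕ :=
  haveI : Fintype ↥G.edgeSet := Fintype.ofFinite _
  ∑ e : ↥G.edgeSet,
    Sym2.lift ⟨fun u v => gdeg G u * gdeg G v * (gdeg G u + gdeg G v),
      fun u v => by dsimp only; ring⟩ (e : Sym2 V)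

/-- The number of edges of `G`. -/
noncomputable def numEdges {V : Type*} (G : SimpleGraph V) : ℕ :=
  Nat.card ↥G.edgeSet

/-! In `G₁ ∨̇_R G₂` a vertex `v` of `G₁` has degree `2 d(v) + n₂`, an inserted vertex has
degree `2`, and a vertex `w` of `G₂` has degree `d(w) + n₁`. Expanding the cubes, the power sums
of the degrees of `Gᵢ` give `F(Gᵢ)`, `M₁(Gᵢ)` and, by the handshake lemma, `2 mᵢ`. -/

lemma Sym2.natCard_mem_of_not_isDiag {α : Type*} {z : Sym2 α} (h : ¬z.IsDiag) :
    Nat.card {x // x ∈ z} = 2 := by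
  classical
  rw [← z.card_toFinset_of_not_isDiag h, ← Nat.card_eq_finsetCard]
  exact Nat.card_congr (Equiv.subtypeEquivRight fun _ => Sym2.mem_toFinset.symm)

section Degree

variable {V : Type*} [Finite V] (G : SimpleGraph V)

lemma gdeg_eq_natCard_neighborSet (v : V) : gdeg G v = Nat.card (G.neighborSet v) := by
  rw [gdeg, @Nat.card_eq_fintype_card _ (Fintype.ofFinite _)]
  exact (@SimpleGraph.card_neighborSet_eq_degree _ G v (Fintype.ofFinite _)).symm

lemma natCard_incident_eq_gdeg (v : V) :
    Nat.card {e : G.edgeSet // v ∈ (e : Sym2 V)} = gdeg G v := by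
  classical
  rw [gdeg_eq_natCard_neighborSet]
  exact Nat.card_congr ((Equiv.subtypeSubtypeEquivSubtypeInter _ _).trans
    (G.incidenceSetEquivNeighborSet v))

variable [Fintype V]

lemma Findex_eq_sum : Findex G = ∑ v, gdeg G v ^ 3 := by
  rw [Findex]; congr!

lemma M1_eq_sum : M1 G = ∑ v, gdeg G v ^ 2 := by
  rw [M1]; congr!

lemma sum_gdeg_eq_two_mul_numEdges : ∑ v, gdeg G v = 2 * numEdges G := by
  classical
  simp_rw [gdeg_eq_natCard_neighborSet, Nat.card_eq_fintype_card,
    SimpleGraph.card_neighborSet_eq_degree]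
  rw [SimpleGraph.sum_degrees_eq_twice_card_edges, numEdges, Nat.card_eq_fintype_card,
    SimpleGraph.edgeFinset_card]

lemma sum_mul_gdeg_add_pow_three (a c : ℕ) :
    ∑ v, (a * gdeg G v + c) ^ 3 =
      a ^ 3 * Findex G + 3 * a ^ 2 * c * M1 G + 6 * a * c ^ 2 * numEdges G
        + Nat.card V * c ^ 3 := by
  have expand : ∀ v, (a * gdeg G v + c) ^ 3 = a ^ 3 * gdeg G v ^ 3
      + 3 * a ^ 2 * c * gdeg G v ^ 2 + 3 * a * c ^ 2 * gdeg G v + c ^ 3 := fun v => by ring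
  simp only [expand, Finset.sum_add_distrib, ← Finset.mul_sum, Finset.sum_const,
    Finset.card_univ, smul_eq_mul, ← Findex_eq_sum, ← M1_eq_sum,
    sum_gdeg_eq_two_mul_numEdges, Nat.card_eq_fintype_card]
  ring

end Degree

lemma SimpleGraph.natCard_neighborSet_sum {A B : Type*} [Finite A] [Finite B]
    (G : SimpleGraph (A ⊕ B)) (x : A ⊕ B) :
    Nat.card (G.neighborSet x) =
      Nat.card {a // G.Adj x (Sum.inl a)} + Nat.card {b // G.Adj x (Sum.inr b)} := by
  rw [← Nat.card_sum]
  exact Nat.card_congr Equiv.subtypeSum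

section JoinOn

variable {A B : Type*} [Finite A] [Finite B] (H : SimpleGraph A) (K : SimpleGraph B)
  (P : A → Prop)

lemma gdeg_joinOn_inl (a : A) [Decidable (P a)] :
    gdeg (joinOn H K P) (Sum.inl a) = gdeg H a + if P a then Nat.card B else 0 := by
  rw [gdeg_eq_natCard_neighborSet, SimpleGraph.natCard_neighborSet_sum,
    gdeg_eq_natCard_neighborSet]
  congr 1
  split_ifs with h
  · exact Nat.card_congr (Equiv.subtypeUnivEquiv fun _ => h)
  · exact @Nat.card_of_isEmpty _ ⟨fun b => h b.2⟩

lemma gdeg_joinOn_inr (b : B) :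
    gdeg (joinOn H K P) (Sum.inr b) = gdeg K b + Nat.card {a // P a} := by
  rw [gdeg_eq_natCard_neighborSet, SimpleGraph.natCard_neighborSet_sum,
    gdeg_eq_natCard_neighborSet, add_comm]
  rfl

end JoinOn

section Rgraph

variable {V : Type*} [Finite V] (G : SimpleGraph V)

lemma gdeg_Rgraph_inl (v : V) : gdeg (Rgraph G) (Sum.inl v) = 2 * gdeg G v := by
  rw [gdeg_eq_natCard_neighborSet, SimpleGraph.natCard_neighborSet_sum]
  change Nat.card (G.neighborSet v) + Nat.card {e : G.edgeSet // v ∈ (e : Sym2 V)} = _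
  rw [natCard_incident_eq_gdeg, ← gdeg_eq_natCard_neighborSet]
  ring

lemma gdeg_Rgraph_inr (e : G.edgeSet) : gdeg (Rgraph G) (Sum.inr e) = 2 := by
  rw [gdeg_eq_natCard_neighborSet, SimpleGraph.natCard_neighborSet_sum]
  change Nat.card {v // v ∈ (e : Sym2 V)} + Nat.card {f : G.edgeSet // False} = 2
  rw [Sym2.natCard_mem_of_not_isDiag (G.not_isDiag_of_mem_edgeSet e.2)]
  simp

end Rgraph

section vertexRJoin

variable {V₁ V₂ : Type*} [Finite V₁] [Finite V₂] (G₁ : SimpleGraph V₁) (G₂ : SimpleGraph V₂)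

lemma gdeg_vertexRJoin_vertex (v : V₁) :
    gdeg (vertexRJoin G₁ G₂) (Sum.inl (Sum.inl v)) = 2 * gdeg G₁ v + Nat.card V₂ := by
  rw [vertexRJoin, gdeg_joinOn_inl, gdeg_Rgraph_inl]
  simp

lemma gdeg_vertexRJoin_inserted (e : G₁.edgeSet) :
    gdeg (vertexRJoin G₁ G₂) (Sum.inl (Sum.inr e)) = 2 := by
  rw [vertexRJoin, gdeg_joinOn_inl, gdeg_Rgraph_inr]
  simp

lemma gdeg_vertexRJoin_right (w : V₂) :
    gdeg (vertexRJoin G₁ G₂) (Sum.inr w) = gdeg G₂ w + Nat.card V₁ := by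
  rw [vertexRJoin, gdeg_joinOn_inr, Nat.card_congr Equiv.sumIsLeft]

end vertexRJoin

theorem Findex_vertexRJoin_general {V₁ V₂ : Type*} [Finite V₁] [Finite V₂]
    (G₁ : SimpleGraph V₁) (G₂ : SimpleGraph V₂)
    (n₁ n₂ m₁ m₂ : ℕ)
    (hn₁ : n₁ = Nat.card V₁) (hn₂ : n₂ = Nat.card V₂)
    (hm₁ : m₁ = numEdges G₁) (hm₂ : m₂ = numEdges G₂) :
    (Findex (vertexRJoin G₁ G₂) : ℤ) =
      8 * (Findex G₁ : ℤ) + (Findex G₂ : ℤ) + 12 * (n₂ : ℤ) * (M1 G₁ : ℤ) + 3 * (n₁ : ℤ) * (M1 G₂ : ℤ)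
        + 12 * (m₁ : ℤ) * (n₂ : ℤ) ^ 2 + 6 * (m₂ : ℤ) * (n₁ : ℤ) ^ 2
        + (n₁ : ℤ) * (n₂ : ℤ) * ((n₁ : ℤ) ^ 2 + (n₂ : ℤ) ^ 2) + 8 * (m₁ : ℤ) := by
  have := Fintype.ofFinite V₁
  have := Fintype.ofFinite V₂
  have := Fintype.ofFinite G₁.edgeSet
  have hF : Findex (vertexRJoin G₁ G₂) = ∑ v, (2 * gdeg G₁ v + n₂) ^ 3
      + ∑ _e : G₁.edgeSet, 2 ^ 3 + ∑ w, (1 * gdeg G₂ w + n₁) ^ 3 := by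
    simp only [Findex_eq_sum, Fintype.sum_sum_type, gdeg_vertexRJoin_vertex,
      gdeg_vertexRJoin_inserted, gdeg_vertexRJoin_right, hn₁, hn₂, one_mul]
  rw [hF, sum_mul_gdeg_add_pow_three, sum_mul_gdeg_add_pow_three, Finset.sum_const,
    Finset.card_univ, ← Nat.card_eq_fintype_card, ← numEdges, ← hn₁, ← hn₂, ← hm₁, ← hm₂,
    smul_eq_mul]
  push_cast
  ring

theorem Findex_vertexRJoin {V₁ V₂ : Type*} [Finite V₁] [Finite V₂]
    (G₁ : SimpleGraph V₁) (G₂ : SimpleGraph V₂)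
    (hc₁ : G₁.Connected) (hc₂ : G₂.Connected)
    (n₁ n₂ m₁ m₂ : ℕ)
    (hn₁ : n₁ = Nat.card V₁) (hn₂ : n₂ = Nat.card V₂)
    (hm₁ : m₁ = numEdges G₁) (hm₂ : m₂ = numEdges G₂) :
    (Findex (vertexRJoin G₁ G₂) : ℤ) =
      8 * (Findex G₁ : ℤ) + (Findex G₂ : ℤ) + 12 * (n₂ : ℤ) * (M1 G₁ : ℤ) + 3 * (n₁ : ℤ) * (M1 G₂ : ℤ)
        + 12 * (m₁ : ℤ) * (n₂ : ℤ) ^ 2 + 6 * (m₂ : ℤ) * (n₁ : ℤ) ^ 2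
        + (n₁ : ℤ) * (n₂ : ℤ) * ((n₁ : ℤ) ^ 2 + (n₂ : ℤ) ^ 2) + 8 * (m₁ : ℤ) :=
  Findex_vertexRJoin_general G₁ G₂ n₁ n₂ m₁ m₂ hn₁ hn₂ hm₁ hm₂
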